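/- arXiv:2303.18152 — 7 statements merged into one kernel-verified Lean document; each statement's English description precedes it below -/
import Mathlib

section
/- For vectors x, y, e in a complex Hilbert space H with ‖e‖ = 1 and any λ ≥ 0, one has |⟨x,e⟩⟨e,y⟩|² ≤ (1/4)·( ((2λ+3)/(λ+1))·‖x‖·‖y‖·|⟨x,y⟩| + ((2λ+1)/(λ+1))·‖x‖²·‖y‖² ). -/
open scoped InnerProductSpace

lemma buzano_aux {H : Type*} [NormedAddCommGroup H] [InnerProductSpace ℂ H]
    (x y e : H) (he : ‖e‖ = 1) :
    2 * ‖⟪x, e⟫_ℂ * ⟪e, y⟫_ℂ‖ ≤ ‖x‖ * ‖y‖ + ‖⟪x, y⟫_ℂ‖ := by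
  set c : ℂ := ⟪e, y⟫_ℂ with hc
  set z : H := ((2 : ℂ) * c) • e - y with hz
  have hee : ⟪e, e⟫_ℂ = 1 := by
    rw [@inner_self_eq_norm_sq_to_K ℂ, he]; norm_num
  have hye : ⟪y, e⟫_ℂ = starRingEnd ℂ c := by
    rw [hc, inner_conj_symm]
  have hzz : ⟪z, z⟫_ℂ = ⟪y, y⟫_ℂ := by
    simp only [hz, inner_sub_left, inner_sub_right, inner_smul_left, inner_smul_right,
      hee, hye, hc]
    ring_nf
    simp only [map_mul, Complex.conj_ofNat]
    ring
  have hnz : ‖z‖ = ‖y‖ := by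
    rw [norm_eq_sqrt_re_inner (𝕜 := ℂ) z, norm_eq_sqrt_re_inner (𝕜 := ℂ) y, hzz]
  have hcs : ‖⟪x, z⟫_ℂ‖ ≤ ‖x‖ * ‖y‖ := by
    rw [← hnz]; exact norm_inner_le_norm x z
  have hxz : ⟪x, z⟫_ℂ = 2 * (⟪x, e⟫_ℂ * c) - ⟪x, y⟫_ℂ := by
    simp [hz, inner_sub_right, inner_smul_right]; ring
  have htri : ‖(2 : ℂ) * (⟪x, e⟫_ℂ * c)‖ ≤ ‖⟪x, z⟫_ℂ‖ + ‖⟪x, y⟫_ℂ‖ := by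
    calc ‖(2 : ℂ) * (⟪x, e⟫_ℂ * c)‖ = ‖⟪x, z⟫_ℂ + ⟪x, y⟫_ℂ‖ := by rw [hxz]; ring_nf
      _ ≤ _ := norm_add_le _ _
  have h2 : ‖(2 : ℂ) * (⟪x, e⟫_ℂ * c)‖ = 2 * ‖⟪x, e⟫_ℂ * c‖ := by
    rw [norm_mul]; norm_num
  calc 2 * ‖⟪x, e⟫_ℂ * c‖ = ‖(2 : ℂ) * (⟪x, e⟫_ℂ * c)‖ := h2.symm
    _ ≤ ‖⟪x, z⟫_ℂ‖ + ‖⟪x, y⟫_ℂ‖ := htri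
    _ ≤ ‖x‖ * ‖y‖ + ‖⟪x, y⟫_ℂ‖ := by linarith

theorem stmt0 {H : Type*} [NormedAddCommGroup H] [InnerProductSpace ℂ H]
    (x y e : H) (he : ‖e‖ = 1) (l : ℝ) (hl : 0 ≤ l) :
    ‖⟪x, e⟫_ℂ * ⟪e, y⟫_ℂ‖ ^ 2 ≤
      (1 / 4) * (((2 * l + 3) / (l + 1)) * ‖x‖ * ‖y‖ * ‖⟪x, y⟫_ℂ‖
        + ((2 * l + 1) / (l + 1)) * ‖x‖ ^ 2 * ‖y‖ ^ 2) := by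
  have hb := buzano_aux x y e he
  have hcs : ‖⟪x, y⟫_ℂ‖ ≤ ‖x‖ * ‖y‖ := norm_inner_le_norm x y
  have ha : (0 : ℝ) ≤ ‖⟪x, e⟫_ℂ * ⟪e, y⟫_ℂ‖ := norm_nonneg _
  have hc : (0 : ℝ) ≤ ‖⟪x, y⟫_ℂ‖ := norm_nonneg _
  have hx : (0 : ℝ) ≤ ‖x‖ := norm_nonneg _
  have hy : (0 : ℝ) ≤ ‖y‖ := norm_nonneg _
  have hl1 : (0 : ℝ) < l + 1 := by linarith
  have hrw : (1 / 4 : ℝ) * (((2 * l + 3) / (l + 1)) * ‖x‖ * ‖y‖ * ‖⟪x, y⟫_ℂ‖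
        + ((2 * l + 1) / (l + 1)) * ‖x‖ ^ 2 * ‖y‖ ^ 2)
      = ((2 * l + 3) * ‖x‖ * ‖y‖ * ‖⟪x, y⟫_ℂ‖
        + (2 * l + 1) * ‖x‖ ^ 2 * ‖y‖ ^ 2) / (4 * (l + 1)) := by
    field_simp
  rw [hrw, le_div_iff₀ (by linarith)]
  have h4 : 4 * ‖⟪x, e⟫_ℂ * ⟪e, y⟫_ℂ‖ ^ 2 ≤ (‖x‖ * ‖y‖ + ‖⟪x, y⟫_ℂ‖) ^ 2 := by
    nlinarith [hb, ha]
  have hBc : ‖⟪x, y⟫_ℂ‖ ≤ ‖x‖ * ‖y‖ := hcs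
  nlinarith [mul_le_mul_of_nonneg_left h4 (le_of_lt hl1),
    mul_nonneg hl (mul_nonneg (sub_nonneg.2 hBc) (by positivity : (0:ℝ) ≤ ‖x‖ * ‖y‖ + ‖⟪x, y⟫_ℂ‖)),
    mul_nonneg (sub_nonneg.2 hBc) hc]
end

section
/- For vectors x, y in a complex Hilbert space and any λ ≥ 0, |⟨x,y⟩|² ≤ (1/(λ+1))·‖x‖·‖y‖·|⟨x,y⟩| + (λ/(λ+1))·‖x‖²·‖y‖², and this quantity is at most ‖x‖²·‖y‖². -/
open scoped InnerProductSpace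

theorem stmt1 {H : Type*} [NormedAddCommGroup H] [InnerProductSpace ℂ H]
    (x y : H) (l : ℝ) (hl : 0 ≤ l) :
    ‖⟪x, y⟫_ℂ‖ ^ 2 ≤
        (1 / (l + 1)) * ‖x‖ * ‖y‖ * ‖⟪x, y⟫_ℂ‖ + (l / (l + 1)) * ‖x‖ ^ 2 * ‖y‖ ^ 2 ∧
      (1 / (l + 1)) * ‖x‖ * ‖y‖ * ‖⟪x, y⟫_ℂ‖ + (l / (l + 1)) * ‖x‖ ^ 2 * ‖y‖ ^ 2 ≤
        ‖x‖ ^ 2 * ‖y‖ ^ 2 := by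
  have h := norm_inner_le_norm (𝕜 := ℂ) x y
  have h0 : (0:ℝ) ≤ ‖⟪x, y⟫_ℂ‖ := norm_nonneg _
  have hx : (0:ℝ) ≤ ‖x‖ := norm_nonneg _
  have hy : (0:ℝ) ≤ ‖y‖ := norm_nonneg _
  have hl1 : (0:ℝ) < l + 1 := by linarith
  constructor
  · rw [div_mul_eq_mul_div, div_mul_eq_mul_div, div_mul_eq_mul_div,
      div_mul_eq_mul_div, div_mul_eq_mul_div, ← add_div, le_div_iff₀ hl1]
    nlinarith [mul_le_mul h h h0 (by positivity : (0:ℝ) ≤ ‖x‖*‖y‖)]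
  · rw [div_mul_eq_mul_div, div_mul_eq_mul_div, div_mul_eq_mul_div,
      div_mul_eq_mul_div, div_mul_eq_mul_div, ← add_div, div_le_iff₀ hl1]
    nlinarith [mul_le_mul h h h0 (by positivity : (0:ℝ) ≤ ‖x‖*‖y‖)]
end

section
/- Let T be a bounded linear operator on a complex Hilbert space and λ ≥ 0. Then ((2λ+3)/(8(λ+1)))·‖|T|² + |T*|²‖·w(T²) + ((2λ+1)/(8(λ+1)))·‖|T|⁴ + |T*|⁴‖ ≤ (1/2)·‖|T|⁴ + |T*|⁴‖; in particular w(T)⁴ ≤ (1/2)·‖|T|⁴ + |T*|⁴‖. -/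
open scoped InnerProductSpace NNReal
open ContinuousLinearMap

variable {H : Type*} [NormedAddCommGroup H] [InnerProductSpace ℂ H]

noncomputable def numRadius [CompleteSpace H] (T : H →L[ℂ] H) : ℝ :=
  ⨆ x : {x : H // ‖x‖ = 1}, ‖⟪T x, (x : H)⟫_ℂ‖

noncomputable def opAbs [CompleteSpace H] (T : H →L[ℂ] H) : H →L[ℂ] H :=
  CFC.sqrt (ContinuousLinearMap.adjoint T * T)

set_option maxHeartbeats 2000000
set_option synthInstance.maxHeartbeats 2000000

theorem stmt3 [CompleteSpace H] (T : H →L[ℂ] H) (l : ℝ) (hl : 0 ≤ l) :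
    (((2 * l + 3) / (8 * (l + 1))) * ‖opAbs T ^ 2 + opAbs (adjoint T) ^ 2‖ * numRadius (T ^ 2)
        + ((2 * l + 1) / (8 * (l + 1))) * ‖opAbs T ^ 4 + opAbs (adjoint T) ^ 4‖
      ≤ (1 / 2) * ‖opAbs T ^ 4 + opAbs (adjoint T) ^ 4‖) ∧
    numRadius T ^ 4 ≤ (1 / 2) * ‖opAbs T ^ 4 + opAbs (adjoint T) ^ 4‖ := by
  set A := adjoint T * T with hA_def
  set B := T * adjoint T with hB_def
  have hA : (0 : H →L[ℂ] H) ≤ A := by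
    simpa [star_eq_adjoint] using star_mul_self_nonneg T
  have hB : (0 : H →L[ℂ] H) ≤ B := by
    simpa [star_eq_adjoint, adjoint_adjoint] using star_mul_self_nonneg (adjoint T)
  have e1 : opAbs T ^ 2 = A := by
    unfold opAbs; exact CFC.sq_sqrt _ hA
  have e2 : opAbs (adjoint T) ^ 2 = B := by
    unfold opAbs; rw [adjoint_adjoint]; exact CFC.sq_sqrt _ hB
  have e3 : opAbs T ^ 4 = A * A := by
    have h : opAbs T ^ 4 = opAbs T ^ 2 * opAbs T ^ 2 := by rw [← pow_add]
    rw [h, e1]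
  have e4 : opAbs (adjoint T) ^ 4 = B * B := by
    have h : opAbs (adjoint T) ^ 4 = opAbs (adjoint T) ^ 2 * opAbs (adjoint T) ^ 2 := by rw [← pow_add]
    rw [h, e2]
  rw [e1, e2, e3, e4]
  set N := ‖A + B‖ with hN
  set M := ‖A * A + B * B‖ with hM
  have hN0 : 0 ≤ N := norm_nonneg _
  have hM0 : 0 ≤ M := norm_nonneg _
  -- pointwise bound: ‖T x‖² + ‖T* x‖² ≤ N on unit vectors
  have hpt : ∀ x : H, ‖x‖ = 1 → ‖T x‖ ^ 2 + ‖adjoint T x‖ ^ 2 ≤ N := by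
    intro x hx
    have h1 : ⟪(A + B) x, x⟫_ℂ = ((‖T x‖ ^ 2 + ‖adjoint T x‖ ^ 2 : ℝ) : ℂ) := by
      simp only [hA_def, hB_def, ContinuousLinearMap.add_apply, inner_add_left,
        ContinuousLinearMap.mul_apply, adjoint_inner_left]
      rw [← adjoint_inner_right T (adjoint T x) x]
      rw [inner_self_eq_norm_sq_to_K, inner_self_eq_norm_sq_to_K]
      norm_cast
    have h2 : ‖⟪(A + B) x, x⟫_ℂ‖ ≤ N := by
      calc ‖⟪(A + B) x, x⟫_ℂ‖ ≤ ‖(A + B) x‖ * ‖x‖ := norm_inner_le_norm _ _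
        _ ≤ ‖A + B‖ * ‖x‖ * ‖x‖ := by gcongr; exact (A + B).le_opNorm x
        _ = N := by rw [hx, hN]; ring
    have h3 : ‖⟪(A + B) x, x⟫_ℂ‖ = ‖T x‖ ^ 2 + ‖adjoint T x‖ ^ 2 := by
      rw [h1, Complex.norm_real, Real.norm_eq_abs, abs_of_nonneg (by positivity)]
    linarith [h3 ▸ h2]
  -- numerical radius of T
  have hw1 : ∀ x : {x : H // ‖x‖ = 1}, ‖⟪T x, (x : H)⟫_ℂ‖ ≤ Real.sqrt (N / 2) := by
    rintro ⟨x, hx⟩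
    rw [Real.le_sqrt (norm_nonneg _) (by positivity)]
    have c1 : ‖⟪T x, x⟫_ℂ‖ ≤ ‖T x‖ := by
      calc ‖⟪T x, x⟫_ℂ‖ ≤ ‖T x‖ * ‖x‖ := norm_inner_le_norm _ _
        _ = ‖T x‖ := by rw [hx, mul_one]
    have c2 : ‖⟪T x, x⟫_ℂ‖ ≤ ‖adjoint T x‖ := by
      rw [← adjoint_inner_right T x x]
      calc ‖⟪x, adjoint T x⟫_ℂ‖ ≤ ‖x‖ * ‖adjoint T x‖ := norm_inner_le_norm _ _
        _ = ‖adjoint T x‖ := by rw [hx, one_mul]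
    have cmul : ‖⟪T x, x⟫_ℂ‖ * ‖⟪T x, x⟫_ℂ‖ ≤ ‖T x‖ * ‖adjoint T x‖ :=
      mul_le_mul c1 c2 (norm_nonneg _) (norm_nonneg _)
    nlinarith [hpt x hx, sq_nonneg (‖T x‖ - ‖adjoint T x‖)]
  have hw0 : 0 ≤ numRadius T := Real.iSup_nonneg fun x => norm_nonneg _
  have hwT : numRadius T ≤ Real.sqrt (N / 2) := Real.iSup_le hw1 (Real.sqrt_nonneg _)
  have hwT2 : numRadius T ^ 2 ≤ N / 2 :=
    (Real.le_sqrt hw0 (by positivity)).mp hwT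
  -- numerical radius of T²
  have hw2 : numRadius (T ^ 2) ≤ N / 2 := by
    apply Real.iSup_le _ (by positivity)
    rintro ⟨x, hx⟩
    have hx2 : (T ^ 2) x = T (T x) := by rw [pow_two]; rfl
    show ‖⟪(T ^ 2) x, x⟫_ℂ‖ ≤ N / 2
    rw [hx2, ← adjoint_inner_right T (T x) x]
    calc ‖⟪T x, adjoint T x⟫_ℂ‖ ≤ ‖T x‖ * ‖adjoint T x‖ := norm_inner_le_norm _ _
      _ ≤ N / 2 := by nlinarith [hpt x hx, sq_nonneg (‖T x‖ - ‖adjoint T x‖)]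
  have hw20 : 0 ≤ numRadius (T ^ 2) := Real.iSup_nonneg fun x => norm_nonneg _
  -- convexity: N² ≤ 2 M
  have hstarA : star A = A := by
    rw [hA_def, star_mul, star_eq_adjoint, star_eq_adjoint, adjoint_adjoint]
  have hstarB : star B = B := by
    rw [hB_def, star_mul, star_eq_adjoint, star_eq_adjoint, adjoint_adjoint]
  have hsum : star (A + B) = A + B := by rw [star_add, hstarA, hstarB]
  have hdiffsq : (0 : H →L[ℂ] H) ≤ (A - B) * (A - B) := by
    have h := star_mul_self_nonneg (A - B)
    rwa [star_sub, hstarA, hstarB] at h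
  have hsumsq : (0 : H →L[ℂ] H) ≤ (A + B) * (A + B) := by
    have h := star_mul_self_nonneg (A + B)
    rwa [hsum] at h
  have hle : (A + B) * (A + B) ≤ (A * A + B * B) + (A * A + B * B) := by
    rw [← sub_nonneg]
    have h : (A * A + B * B) + (A * A + B * B) - (A + B) * (A + B) = (A - B) * (A - B) := by
      noncomm_ring
    rw [h]; exact hdiffsq
  have key3 : N * N ≤ 2 * M := by
    have hNN : N * N = ‖(A + B) * (A + B)‖ := by
      calc N * N = ‖star (A + B) * (A + B)‖ := (CStarRing.norm_star_mul_self).symm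
        _ = ‖(A + B) * (A + B)‖ := by rw [hsum]
    rw [hNN]
    calc ‖(A + B) * (A + B)‖ ≤ ‖(A * A + B * B) + (A * A + B * B)‖ :=
          CStarAlgebra.norm_le_norm_of_nonneg_of_le hsumsq hle
      _ ≤ M + M := norm_add_le _ _
      _ = 2 * M := by ring
  -- assemble
  have hNw : N * numRadius (T ^ 2) ≤ M := by
    calc N * numRadius (T ^ 2) ≤ N * (N / 2) := mul_le_mul_of_nonneg_left hw2 hN0
      _ ≤ M := by nlinarith [key3]
  constructor
  · have hl1 : (0 : ℝ) < l + 1 := by linarith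
    have c1 : (0 : ℝ) ≤ (2 * l + 3) / (8 * (l + 1)) := by positivity
    have csum : (2 * l + 3) / (8 * (l + 1)) + (2 * l + 1) / (8 * (l + 1)) = 1 / 2 := by
      field_simp
      ring
    have key : (2 * l + 3) / (8 * (l + 1)) * N * numRadius (T ^ 2)
        ≤ (2 * l + 3) / (8 * (l + 1)) * M := by
      rw [mul_assoc]
      exact mul_le_mul_of_nonneg_left hNw c1
    calc (2 * l + 3) / (8 * (l + 1)) * N * numRadius (T ^ 2)
          + (2 * l + 1) / (8 * (l + 1)) * M
        ≤ (2 * l + 3) / (8 * (l + 1)) * M + (2 * l + 1) / (8 * (l + 1)) * M := by linarith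
      _ = ((2 * l + 3) / (8 * (l + 1)) + (2 * l + 1) / (8 * (l + 1))) * M := by ring
      _ = 1 / 2 * M := by rw [csum]
  · have h4 : numRadius T ^ 2 * numRadius T ^ 2 ≤ (N / 2) * (N / 2) :=
      mul_le_mul hwT2 hwT2 (by positivity) (by positivity)
    nlinarith [key3]
end

section
/- For vectors x, y, e in a complex Hilbert space with ‖e‖ = 1, α ∈ [0,1], and r ≥ 1, one has |⟨x,e⟩⟨e,y⟩|^{2r} ≤ (α/2)·(‖x‖^{2r}‖y‖^{2r} + |⟨x,y⟩|^{2r}) + ((1−α)/2)·(‖x‖^r‖y‖^r + |⟨x,y⟩|^r)·|⟨x,e⟩⟨e,y⟩|^r. -/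
open scoped InnerProductSpace

/-- convexity of rpow: midpoint inequality -/
lemma half_rpow_aux (u v : ℝ) (hu : 0 ≤ u) (hv : 0 ≤ v) {p : ℝ} (hp : 1 ≤ p) :
    ((u + v) / 2) ^ p ≤ (u ^ p + v ^ p) / 2 := by
  lift u to NNReal using hu
  lift v to NNReal using hv
  have h := NNReal.rpow_arith_mean_le_arith_mean2_rpow (1/2) (1/2) u v
    (by simpa using add_halves (1 : NNReal)) hp
  have h2 : ((u + v) / 2 : NNReal) ^ p ≤ (u ^ p + v ^ p) / 2 := by
    have e1 : ((u + v) / 2 : NNReal) = 1/2 * u + 1/2 * v := by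
      rw [div_eq_mul_inv, add_mul]; ring_nf
    have e2 : ((u ^ p + v ^ p) / 2 : NNReal) = 1/2 * u ^ p + 1/2 * v ^ p := by
      rw [div_eq_mul_inv, add_mul]; ring_nf
    rw [e1, e2]; exact h
  exact_mod_cast h2

theorem stmt4 {H : Type*} [NormedAddCommGroup H] [InnerProductSpace ℂ H]
    (x y e : H) (he : ‖e‖ = 1) (a r : ℝ) (ha : a ∈ Set.Icc (0:ℝ) 1) (hr : 1 ≤ r) :
    ‖⟪x, e⟫_ℂ * ⟪e, y⟫_ℂ‖ ^ (2 * r) ≤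
      (a / 2) * (‖x‖ ^ (2 * r) * ‖y‖ ^ (2 * r) + ‖⟪x, y⟫_ℂ‖ ^ (2 * r))
        + ((1 - a) / 2) * (‖x‖ ^ r * ‖y‖ ^ r + ‖⟪x, y⟫_ℂ‖ ^ r)
          * ‖⟪x, e⟫_ℂ * ⟪e, y⟫_ℂ‖ ^ r := by
  obtain ⟨ha0, ha1⟩ := ha
  set B := ‖⟪x, e⟫_ℂ * ⟪e, y⟫_ℂ‖ with hBdef
  set C := ‖x‖ * ‖y‖ with hCdef
  set D := ‖⟪x, y⟫_ℂ‖ with hDdef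
  have hB0 : (0:ℝ) ≤ B := norm_nonneg _
  have hC0 : (0:ℝ) ≤ C := mul_nonneg (norm_nonneg _) (norm_nonneg _)
  have hD0 : (0:ℝ) ≤ D := norm_nonneg _
  have hbuz : B ≤ (C + D) / 2 := by
    have := buzano_aux x y e he
    linarith
  have h2r : (1:ℝ) ≤ 2 * r := by linarith
  have hr1 : B ^ r ≤ (C ^ r + D ^ r) / 2 :=
    (Real.rpow_le_rpow hB0 hbuz (by linarith)).trans (half_rpow_aux C D hC0 hD0 hr)
  have hr2 : B ^ (2*r) ≤ (C ^ (2*r) + D ^ (2*r)) / 2 :=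
    (Real.rpow_le_rpow hB0 hbuz (by linarith)).trans (half_rpow_aux C D hC0 hD0 h2r)
  have hBsplit : B ^ (2*r) = B ^ r * B ^ r := by
    rw [two_mul, Real.rpow_add' hB0 (by linarith)]
  have hr3 : B ^ (2*r) ≤ ((C ^ r + D ^ r) / 2) * B ^ r := by
    rw [hBsplit]
    exact mul_le_mul_of_nonneg_right hr1 (Real.rpow_nonneg hB0 r)
  have hCsplit : ‖x‖ ^ (2*r) * ‖y‖ ^ (2*r) = C ^ (2*r) := by
    rw [hCdef, Real.mul_rpow (norm_nonneg _) (norm_nonneg _)]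
  have hCsplit' : ‖x‖ ^ r * ‖y‖ ^ r = C ^ r := by
    rw [hCdef, Real.mul_rpow (norm_nonneg _) (norm_nonneg _)]
  rw [hCsplit, hCsplit']
  nlinarith [mul_le_mul_of_nonneg_left hr2 ha0,
    mul_le_mul_of_nonneg_left hr3 (by linarith : (0:ℝ) ≤ 1 - a)]
end

section
/- Let T be a bounded linear operator on a complex Hilbert space, α ∈ [0,1], r ≥ 1. Then w(T)^{4r} ≤ (α/8)·‖|T|^{4r} + |T*|^{4r}‖ + (α/4)·w(|T*|^{2r}|T|^{2r}) + (α/2)·w(T²)^{2r} + ((1−α)/4)·‖|T|^{2r} + |T*|^{2r}‖·w(T)^{2r} + ((1−α)/2)·w(T²)^r·w(T)^{2r}. -/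
open scoped InnerProductSpace NNReal
open ContinuousLinearMap

variable {H : Type*} [NormedAddCommGroup H] [InnerProductSpace ℂ H]

/-!
Fix a unit vector `x`. Buzano's inequality applied to `T x`, `T* x` gives
`|⟪T x, x⟫|² ≤ (‖T x‖ ‖T* x‖ + |⟪T² x, x⟫|) / 2`, and convexity of `t ↦ t ^ r` carries this over
to `r`-th powers. The Hölder–McCarthy inequality `⟪B x, x⟫ ^ r ≤ ⟪B ^ r x, x⟫` for `B ≥ 0` bounds
`‖T x‖ ^ (2r)` by `⟪|T| ^ (2r) x, x⟫` and `‖T* x‖ ^ (2r)` by `⟪|T*| ^ (2r) x, x⟫`. Estimating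
`(‖T x‖ ‖T* x‖) ^ r` by AM-GM and keeping one factor `w(T) ^ (2r)` gives the bound with weight
`1 - α`; squaring instead and applying Buzano once more to `|T| ^ (2r) x`, `|T*| ^ (2r) x` gives the
bound with weight `α`. The theorem is their convex combination.
-/

namespace Real

lemma rpow_tangent_le_rpow {s c t : ℝ} (hs : 1 ≤ s) (hc : 0 ≤ c) (ht : 0 ≤ t) :
    s * c ^ (s - 1) * t - (s - 1) * c ^ s ≤ t ^ s := by
  have hs₀ : 0 < s := by linarith
  have amgm := geom_mean_le_arith_mean2_weighted (w₁ := 1 / s) (w₂ := 1 - 1 / s)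
    (p₁ := t ^ s) (p₂ := c ^ s) (by positivity)
    (by rw [sub_nonneg, div_le_one hs₀]; exact hs) (by positivity) (by positivity) (by ring)
  rw [← rpow_mul ht, mul_one_div_cancel hs₀.ne', rpow_one, ← rpow_mul hc,
    show s * (1 - 1 / s) = s - 1 by field_simp] at amgm
  have := mul_le_mul_of_nonneg_left amgm hs₀.le
  field_simp at this
  linarith

lemma add_div_two_rpow_le {u v p : ℝ} (hu : 0 ≤ u) (hv : 0 ≤ v) (hp : 1 ≤ p) :
    ((u + v) / 2) ^ p ≤ (u ^ p + v ^ p) / 2 := by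
  have := (convexOn_rpow hp).2 (Set.mem_Ici.2 hu) (Set.mem_Ici.2 hv)
    (by norm_num : (0 : ℝ) ≤ 1 / 2) (by norm_num : (0 : ℝ) ≤ 1 / 2) (by norm_num)
  simp only [smul_eq_mul] at this
  rw [show (u + v) / 2 = 1 / 2 * u + 1 / 2 * v by ring]
  linarith

lemma rpow_two_mul {x : ℝ} (hx : 0 ≤ x) (r : ℝ) : x ^ (2 * r) = (x ^ r) ^ 2 := by
  rw [mul_comm, rpow_mul hx, rpow_two]

end Real

namespace CFC

variable {A : Type*} [CStarAlgebra A] [PartialOrder A] [StarOrderedRing A]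

lemma smul_sub_smul_one_le_rpow {a : A} (ha : 0 ≤ a) {s c : ℝ} (hs : 1 ≤ s) (hc : 0 ≤ c) :
    (s * c ^ (s - 1)) • a - ((s - 1) * c ^ s) • (1 : A) ≤ a ^ s := by
  calc (s * c ^ (s - 1)) • a - ((s - 1) * c ^ s) • (1 : A)
      = cfc (fun t : ℝ => s * c ^ (s - 1) * t - (s - 1) * c ^ s) a := by
        rw [cfc_sub .., cfc_const_mul_id .., cfc_const .., Algebra.algebraMap_eq_smul_one]
    _ ≤ cfc (fun t : ℝ => t ^ s) a :=
        cfc_mono (fun t ht => Real.rpow_tangent_le_rpow hs hc (spectrum_nonneg_of_nonneg ha ht))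
          (hg := (Real.continuous_rpow_const (by linarith)).continuousOn)
    _ = a ^ s := (rpow_eq_cfc_real ha).symm

lemma rpow_mul_rpow_self {a : A} (ha : 0 ≤ a) {s : ℝ} (hs : 0 ≤ s) :
    a ^ s * a ^ s = a ^ (2 * s) := by
  rw [mul_comm 2 s, ← rpow_rpow_of_exponent_nonneg a s 2 hs zero_le_two ha, ← Nat.cast_ofNat,
    rpow_natCast (a ^ s) 2 rpow_nonneg, pow_two]

end CFC

section InnerProductSpace

variable {𝕜 E : Type*} [RCLike 𝕜] [NormedAddCommGroup E] [InnerProductSpace 𝕜 E]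

/-- Buzano's inequality: reflecting `a` in the line `𝕜 ∙ e` turns `2 ⟪a, e⟫ ⟪e, b⟫ - ⟪a, b⟫` into
an inner product with a vector of norm `‖a‖`. -/
theorem norm_inner_mul_inner_le (a b : E) {e : E} (he : ‖e‖ = 1) :
    ‖⟪a, e⟫_𝕜 * ⟪e, b⟫_𝕜‖ ≤ (‖a‖ * ‖b‖ + ‖⟪a, b⟫_𝕜‖) / 2 := by
  set R := (𝕜 ∙ e).reflection
  have hR : ⟪R a, b⟫_𝕜 = 2 * (⟪a, e⟫_𝕜 * ⟪e, b⟫_𝕜) - ⟪a, b⟫_𝕜 := by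
    rw [Submodule.reflection_apply, Submodule.starProjection_unit_singleton 𝕜 he,
      inner_sub_left, two_smul, inner_add_left, inner_smul_left, inner_conj_symm]
    ring
  calc ‖⟪a, e⟫_𝕜 * ⟪e, b⟫_𝕜‖ = ‖⟪R a, b⟫_𝕜 + ⟪a, b⟫_𝕜‖ / 2 := by
        rw [hR, sub_add_cancel, norm_mul]; norm_num
    _ ≤ (‖R a‖ * ‖b‖ + ‖⟪a, b⟫_𝕜‖) / 2 := by
        gcongr; exact (norm_add_le _ _).trans (by gcongr; exact norm_inner_le_norm _ _)
    _ = (‖a‖ * ‖b‖ + ‖⟪a, b⟫_𝕜‖) / 2 := by rw [LinearIsometryEquiv.norm_map]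

lemma ContinuousLinearMap.re_inner_le_re_inner_of_le {S₁ S₂ : E →L[𝕜] E} (h : S₁ ≤ S₂) (x : E) :
    RCLike.re ⟪S₁ x, x⟫_𝕜 ≤ RCLike.re ⟪S₂ x, x⟫_𝕜 := by
  have := ((le_def S₁ S₂).mp h).re_inner_nonneg_left x
  rw [sub_apply, inner_sub_left, map_sub] at this
  linarith

lemma ContinuousLinearMap.re_inner_le_opNorm (S : E →L[𝕜] E) {x : E} (hx : ‖x‖ = 1) :
    RCLike.re ⟪S x, x⟫_𝕜 ≤ ‖S‖ := by
  simpa [hx] using (re_inner_le_norm (S x) x).trans (by simpa [hx] using S.le_opNorm x)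

end InnerProductSpace

section Operators

variable [CompleteSpace H]

lemma numRadius_nonneg (T : H →L[ℂ] H) : 0 ≤ numRadius T :=
  Real.iSup_nonneg fun _ => norm_nonneg _

lemma norm_inner_le_numRadius (T : H →L[ℂ] H) {x : H} (hx : ‖x‖ = 1) :
    ‖⟪T x, x⟫_ℂ‖ ≤ numRadius T := by
  refine le_ciSup (f := fun y : {y : H // ‖y‖ = 1} => ‖⟪T y, (y : H)⟫_ℂ‖) ⟨‖T‖, ?_⟩ ⟨x, hx⟩
  rintro - ⟨y, rfl⟩
  calc ‖⟪T y, (y : H)⟫_ℂ‖ ≤ ‖T y‖ * ‖(y : H)‖ := norm_inner_le_norm _ _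
    _ ≤ ‖T‖ := by simpa [y.2] using T.le_opNorm y

lemma numRadius_rpow_le {T : H →L[ℂ] H} {p c : ℝ} (hp : 0 < p) (hc : 0 ≤ c)
    (h : ∀ x : H, ‖x‖ = 1 → ‖⟪T x, x⟫_ℂ‖ ^ p ≤ c) : numRadius T ^ p ≤ c := by
  rw [← Real.le_rpow_inv_iff_of_pos (numRadius_nonneg T) hc hp]
  refine Real.iSup_le (fun x => ?_) (by positivity)
  rw [Real.le_rpow_inv_iff_of_pos (norm_nonneg _) hc hp]
  exact h x x.2

/-- The Hölder–McCarthy inequality: pair the operator tangent-line bound at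
`c = re ⟪B x, x⟫` with `x`. -/
lemma rpow_re_inner_le_re_inner_rpow {B : H →L[ℂ] H} (hB : 0 ≤ B) {s : ℝ} (hs : 1 ≤ s)
    {x : H} (hx : ‖x‖ = 1) : RCLike.re ⟪B x, x⟫_ℂ ^ s ≤ RCLike.re ⟪(B ^ s) x, x⟫_ℂ := by
  set c := RCLike.re ⟪B x, x⟫_ℂ
  have hc : 0 ≤ c := ((nonneg_iff_isPositive B).1 hB).re_inner_nonneg_left x
  have tangent := re_inner_le_re_inner_of_le (CFC.smul_sub_smul_one_le_rpow hB hs hc) x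
  have hpow : c ^ (s - 1) * c = c ^ s := by
    rw [← Real.rpow_add_one' hc (by linarith), sub_add_cancel]
  simp only [sub_apply, smul_apply, one_apply_eq_self, inner_sub_left, map_sub,
    RCLike.real_smul_eq_coe_smul (K := ℂ), inner_smul_left, inner_self_eq_norm_sq_to_K, hx,
    RCLike.conj_ofReal, RCLike.re_ofReal_mul, RCLike.ofReal_one, one_pow, RCLike.one_re] at tangent
  rw [show RCLike.re ⟪B x, x⟫_ℂ = c from rfl, mul_assoc, hpow] at tangent
  linarith

lemma re_inner_mul_re_inner_le {P Q : H →L[ℂ] H} (hP : IsSelfAdjoint P) (hQ : IsSelfAdjoint Q)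
    {x : H} (hx : ‖x‖ = 1) :
    RCLike.re ⟪P x, x⟫_ℂ * RCLike.re ⟪Q x, x⟫_ℂ
      ≤ (‖P * P + Q * Q‖ / 2 + numRadius (Q * P)) / 2 := by
  have hsq : ∀ {S : H →L[ℂ] H}, IsSelfAdjoint S → ‖S x‖ ^ 2 = RCLike.re ⟪(S * S) x, x⟫_ℂ :=
    fun hS => by rw [apply_norm_sq_eq_inner_adjoint_left, hS.adjoint_eq, mul_def]
  have hcross : ⟪P x, Q x⟫_ℂ = ⟪(Q * P) x, x⟫_ℂ := by
    rw [mul_apply_eq_comp, ← adjoint_inner_left, hQ.adjoint_eq]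
  have hnorms : ‖P x‖ * ‖Q x‖ ≤ ‖P * P + Q * Q‖ / 2 := by
    have := re_inner_le_opNorm (P * P + Q * Q) hx
    rw [add_apply, inner_add_left, map_add, ← hsq hP, ← hsq hQ] at this
    nlinarith [sq_nonneg (‖P x‖ - ‖Q x‖)]
  calc RCLike.re ⟪P x, x⟫_ℂ * RCLike.re ⟪Q x, x⟫_ℂ ≤ ‖⟪P x, x⟫_ℂ * ⟪x, Q x⟫_ℂ‖ := by
        rw [norm_mul, norm_inner_symm x]
        exact (le_abs_self _).trans (by rw [abs_mul]; gcongr <;> exact RCLike.abs_re_le_norm _)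
    _ ≤ (‖P x‖ * ‖Q x‖ + ‖⟪P x, Q x⟫_ℂ‖) / 2 := norm_inner_mul_inner_le _ _ hx
    _ ≤ (‖P * P + Q * Q‖ / 2 + numRadius (Q * P)) / 2 := by
        rw [hcross]; gcongr; exact norm_inner_le_numRadius _ hx

lemma opAbs_rpow_two_mul (T : H →L[ℂ] H) {s : ℝ} (hs : 0 ≤ s) :
    opAbs T ^ (2 * s) = (adjoint T * T) ^ s := by
  rw [opAbs, CFC.sqrt_eq_rpow, CFC.rpow_rpow_of_exponent_nonneg _ _ _ (by norm_num)
    (by positivity) (by simpa [star_eq_adjoint] using star_mul_self_nonneg T)]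
  ring_nf

lemma norm_apply_rpow_le_re_inner_opAbs_rpow (T : H →L[ℂ] H) {r : ℝ} (hr : 1 ≤ r) {x : H}
    (hx : ‖x‖ = 1) : ‖T x‖ ^ (2 * r) ≤ RCLike.re ⟪(opAbs T ^ (2 * r)) x, x⟫_ℂ := by
  rw [opAbs_rpow_two_mul T (by linarith), Real.rpow_mul (norm_nonneg _), Real.rpow_two,
    apply_norm_sq_eq_inner_adjoint_left, ← mul_def]
  exact rpow_re_inner_le_re_inner_rpow
    (by simpa [star_eq_adjoint] using star_mul_self_nonneg T) hr hx

lemma norm_inner_rpow_two_mul_le (T : H →L[ℂ] H) {r : ℝ} (hr : 1 ≤ r) {x : H}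
    (hx : ‖x‖ = 1) :
    ‖⟪T x, x⟫_ℂ‖ ^ (2 * r) ≤ ((‖T x‖ * ‖adjoint T x‖) ^ r + ‖⟪(T ^ 2) x, x⟫_ℂ‖ ^ r) / 2 := by
  have buzano : ‖⟪T x, x⟫_ℂ‖ ^ 2 ≤ (‖T x‖ * ‖adjoint T x‖ + ‖⟪(T ^ 2) x, x⟫_ℂ‖) / 2 := by
    have h := norm_inner_mul_inner_le (𝕜 := ℂ) (T x) (adjoint T x) hx
    rwa [adjoint_inner_right, adjoint_inner_right, ← mul_apply_eq_comp, ← pow_two, ← pow_two,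
      norm_pow] at h
  calc ‖⟪T x, x⟫_ℂ‖ ^ (2 * r) = (‖⟪T x, x⟫_ℂ‖ ^ 2) ^ r := by
        rw [Real.rpow_mul (norm_nonneg _), Real.rpow_two]
    _ ≤ ((‖T x‖ * ‖adjoint T x‖ + ‖⟪(T ^ 2) x, x⟫_ℂ‖) / 2) ^ r := by gcongr
    _ ≤ _ := Real.add_div_two_rpow_le (by positivity) (norm_nonneg _) hr

lemma norm_mul_norm_adjoint_rpow_le (T : H →L[ℂ] H) {r : ℝ} (hr : 1 ≤ r) {x : H}
    (hx : ‖x‖ = 1) :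
    (‖T x‖ * ‖adjoint T x‖) ^ r ≤ ‖opAbs T ^ (2 * r) + opAbs (adjoint T) ^ (2 * r)‖ / 2 := by
  have hT := norm_apply_rpow_le_re_inner_opAbs_rpow T hr hx
  have hT' := norm_apply_rpow_le_re_inner_opAbs_rpow (adjoint T) hr hx
  have hsum := re_inner_le_opNorm (opAbs T ^ (2 * r) + opAbs (adjoint T) ^ (2 * r)) hx
  rw [add_apply, inner_add_left, map_add] at hsum
  rw [Real.rpow_two_mul (norm_nonneg _)] at hT hT'
  rw [Real.mul_rpow (norm_nonneg _) (norm_nonneg _)]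
  nlinarith [sq_nonneg (‖T x‖ ^ r - ‖adjoint T x‖ ^ r)]

lemma norm_mul_norm_adjoint_rpow_sq_le (T : H →L[ℂ] H) {r : ℝ} (hr : 1 ≤ r) {x : H}
    (hx : ‖x‖ = 1) :
    ((‖T x‖ * ‖adjoint T x‖) ^ r) ^ 2 ≤ ‖opAbs T ^ (4 * r) + opAbs (adjoint T) ^ (4 * r)‖ / 4
      + numRadius (opAbs (adjoint T) ^ (2 * r) * opAbs T ^ (2 * r)) / 2 := by
  have hT := norm_apply_rpow_le_re_inner_opAbs_rpow T hr hx
  have hT' := norm_apply_rpow_le_re_inner_opAbs_rpow (adjoint T) hr hx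
  have hprod := re_inner_mul_re_inner_le
    (IsSelfAdjoint.of_nonneg (CFC.rpow_nonneg (a := opAbs T) (y := 2 * r)))
    (IsSelfAdjoint.of_nonneg (CFC.rpow_nonneg (a := opAbs (adjoint T)) (y := 2 * r))) hx
  rw [CFC.rpow_mul_rpow_self (CFC.sqrt_nonneg _) (by positivity),
    CFC.rpow_mul_rpow_self (CFC.sqrt_nonneg _) (by positivity), ← mul_assoc,
    show (2 : ℝ) * 2 = 4 by norm_num] at hprod
  calc ((‖T x‖ * ‖adjoint T x‖) ^ r) ^ 2 = ‖T x‖ ^ (2 * r) * ‖adjoint T x‖ ^ (2 * r) := by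
        rw [Real.mul_rpow (norm_nonneg _) (norm_nonneg _), mul_pow,
          Real.rpow_two_mul (norm_nonneg _), Real.rpow_two_mul (norm_nonneg _)]
    _ ≤ _ := mul_le_mul hT hT' (by positivity) (le_trans (by positivity) hT)
    _ ≤ _ := by linarith

lemma numRadius_rpow_four_mul_le_opAbs_rpow_four_mul (T : H →L[ℂ] H) {r : ℝ} (hr : 1 ≤ r) :
    numRadius T ^ (4 * r) ≤ ‖opAbs T ^ (4 * r) + opAbs (adjoint T) ^ (4 * r)‖ / 8
      + numRadius (opAbs (adjoint T) ^ (2 * r) * opAbs T ^ (2 * r)) / 4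
      + numRadius (T ^ 2) ^ (2 * r) / 2 := by
  have hw := numRadius_nonneg (opAbs (adjoint T) ^ (2 * r) * opAbs T ^ (2 * r))
  have hw₂ := Real.rpow_nonneg (numRadius_nonneg (T ^ 2)) (2 * r)
  refine numRadius_rpow_le (by positivity) (by positivity) fun x hx => ?_
  set m := (‖T x‖ * ‖adjoint T x‖) ^ r
  set d := ‖⟪(T ^ 2) x, x⟫_ℂ‖ ^ r
  have hd : d ≤ numRadius (T ^ 2) ^ r :=
    Real.rpow_le_rpow (norm_nonneg _) (norm_inner_le_numRadius _ hx) (by linarith)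
  calc ‖⟪T x, x⟫_ℂ‖ ^ (4 * r) = (‖⟪T x, x⟫_ℂ‖ ^ (2 * r)) ^ 2 := by
        rw [← Real.rpow_two_mul (norm_nonneg _), ← mul_assoc]; norm_num
    _ ≤ ((m + d) / 2) ^ 2 := by gcongr; exact norm_inner_rpow_two_mul_le T hr hx
    _ ≤ (m ^ 2 + d ^ 2) / 2 := by nlinarith [sq_nonneg (m - d)]
    _ ≤ _ := by
        have := norm_mul_norm_adjoint_rpow_sq_le T hr hx
        rw [Real.rpow_two_mul (numRadius_nonneg _)]
        nlinarith [Real.rpow_nonneg (norm_nonneg ⟪(T ^ 2) x, x⟫_ℂ) r]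

lemma numRadius_rpow_four_mul_le_opAbs_rpow_two_mul (T : H →L[ℂ] H) {r : ℝ} (hr : 1 ≤ r) :
    numRadius T ^ (4 * r) ≤ (‖opAbs T ^ (2 * r) + opAbs (adjoint T) ^ (2 * r)‖ / 4
      + numRadius (T ^ 2) ^ r / 2) * numRadius T ^ (2 * r) := by
  have hw₂ := Real.rpow_nonneg (numRadius_nonneg (T ^ 2)) r
  have hw := Real.rpow_nonneg (numRadius_nonneg T) (2 * r)
  refine numRadius_rpow_le (by positivity) (by positivity) fun x hx => ?_
  have hd : ‖⟪(T ^ 2) x, x⟫_ℂ‖ ^ r ≤ numRadius (T ^ 2) ^ r :=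
    Real.rpow_le_rpow (norm_nonneg _) (norm_inner_le_numRadius _ hx) (by linarith)
  calc ‖⟪T x, x⟫_ℂ‖ ^ (4 * r) = ‖⟪T x, x⟫_ℂ‖ ^ (2 * r) * ‖⟪T x, x⟫_ℂ‖ ^ (2 * r) := by
        rw [← Real.rpow_add' (norm_nonneg _) (by positivity)]; ring_nf
    _ ≤ ((‖T x‖ * ‖adjoint T x‖) ^ r + ‖⟪(T ^ 2) x, x⟫_ℂ‖ ^ r) / 2 * numRadius T ^ (2 * r) :=
        mul_le_mul (norm_inner_rpow_two_mul_le T hr hx)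
          (Real.rpow_le_rpow (norm_nonneg _) (norm_inner_le_numRadius T hx) (by positivity))
          (by positivity) (by positivity)
    _ ≤ _ := by gcongr; linarith [norm_mul_norm_adjoint_rpow_le T hr hx]

end Operators

theorem stmt5 [CompleteSpace H] (T : H →L[ℂ] H) (a r : ℝ)
    (ha : a ∈ Set.Icc (0:ℝ) 1) (hr : 1 ≤ r) :
    numRadius T ^ (4 * r) ≤
      (a / 8) * ‖opAbs T ^ (4 * r) + opAbs (adjoint T) ^ (4 * r)‖
        + (a / 4) * numRadius (opAbs (adjoint T) ^ (2 * r) * opAbs T ^ (2 * r))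
        + (a / 2) * numRadius (T ^ 2) ^ (2 * r)
        + ((1 - a) / 4) * ‖opAbs T ^ (2 * r) + opAbs (adjoint T) ^ (2 * r)‖
            * numRadius T ^ (2 * r)
        + ((1 - a) / 2) * numRadius (T ^ 2) ^ r * numRadius T ^ (2 * r) := by
  obtain ⟨ha₀, ha₁⟩ := ha
  have h₁ := numRadius_rpow_four_mul_le_opAbs_rpow_four_mul T hr
  have h₂ := numRadius_rpow_four_mul_le_opAbs_rpow_two_mul T hr
  calc numRadius T ^ (4 * r) = a * numRadius T ^ (4 * r) + (1 - a) * numRadius T ^ (4 * r) := by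
        ring
    _ ≤ _ := add_le_add (mul_le_mul_of_nonneg_left h₁ ha₀)
        (mul_le_mul_of_nonneg_left h₂ (sub_nonneg.2 ha₁))
    _ = _ := by ring
end

section
/- For positive reals x, y and t ∈ [0,1], K(m,2)^{min(t,1−t)}·x^t·y^{1−t} ≤ t·x + (1−t)·y, where m = x/y and K(m,2) = (m+1)²/(4m). -/
theorem stmt13 (x y t : ℝ) (hx : 0 < x) (hy : 0 < y) (ht : t ∈ Set.Icc (0:ℝ) 1) :
    ((x / y + 1) ^ 2 / (4 * (x / y))) ^ (min t (1 - t)) * x ^ t * y ^ (1 - t) ≤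
      t * x + (1 - t) * y := by
  obtain ⟨ht0, ht1⟩ := ht
  set a : ℝ := (x + y) / 2 with ha_def
  have ha : 0 < a := by positivity
  have hK : (x / y + 1) ^ 2 / (4 * (x / y)) = a ^ 2 / (x * y) := by
    field_simp
    ring
  rw [hK]
  have hsq : ∀ s : ℝ, (a ^ 2 / (x * y)) ^ s = a ^ (2 * s) / (x ^ s * y ^ s) := by
    intro s
    rw [Real.div_rpow (by positivity) (by positivity), ← Real.rpow_natCast a 2,
      ← Real.rpow_mul ha.le, Real.mul_rpow hx.le hy.le]
    norm_num
  rcases le_total t (1 - t) with h | h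
  · have hmin : min t (1 - t) = t := min_eq_left h
    rw [hmin, hsq t]
    have heq : a ^ (2 * t) / (x ^ t * y ^ t) * x ^ t * y ^ (1 - t)
        = a ^ (2 * t) * y ^ (1 - 2 * t) := by
      have : y ^ (1 - t) = y ^ (1 - 2 * t) * y ^ t := by
        rw [← Real.rpow_add hy]; ring_nf
      rw [this]; field_simp
    rw [heq]
    have := Real.geom_mean_le_arith_mean2_weighted (by linarith : (0:ℝ) ≤ 2 * t)
      (by linarith : (0:ℝ) ≤ 1 - 2 * t) ha.le hy.le (by ring)
    calc a ^ (2 * t) * y ^ (1 - 2 * t) ≤ 2 * t * a + (1 - 2 * t) * y := this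
      _ = t * x + (1 - t) * y := by rw [ha_def]; ring
  · have hmin : min t (1 - t) = 1 - t := min_eq_right h
    rw [hmin, hsq (1 - t)]
    have heq : a ^ (2 * (1 - t)) / (x ^ (1 - t) * y ^ (1 - t)) * x ^ t * y ^ (1 - t)
        = a ^ (2 * (1 - t)) * x ^ (2 * t - 1) := by
      have : x ^ t = x ^ (2 * t - 1) * x ^ (1 - t) := by
        rw [← Real.rpow_add hx]; ring_nf
      rw [this]; field_simp
    rw [heq]
    have := Real.geom_mean_le_arith_mean2_weighted (by linarith : (0:ℝ) ≤ 2 * (1 - t))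
      (by linarith : (0:ℝ) ≤ 2 * t - 1) ha.le hx.le (by ring)
    calc a ^ (2 * (1 - t)) * x ^ (2 * t - 1) ≤ 2 * (1 - t) * a + (2 * t - 1) * x := this
      _ = t * x + (1 - t) * y := by rw [ha_def]; ring
end

section
/- Let T be a bounded linear operator on a complex Hilbert space. Then for every unit vector x, |⟨Tx,x⟩|⁴ ≤ (1/4)·(‖Tx‖·‖T*x‖ + |⟨T²x,x⟩|)·‖Tx‖·‖T*x‖ + (1/4)·(‖Tx‖·‖T*x‖ + |⟨T²x,x⟩|)·|⟨T²x,x⟩|, i.e. |⟨Tx,x⟩|⁴ ≤ (1/4)·(‖Tx‖‖T*x‖ + |⟨T²x,x⟩|)². -/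
open scoped InnerProductSpace NNReal
open ContinuousLinearMap

variable {H : Type*} [NormedAddCommGroup H] [InnerProductSpace ℂ H]

/-- Buzano's inequality. -/
lemma buzano (a b e : H) (he : ‖e‖ = 1) :
    ‖⟪a, e⟫_ℂ * ⟪e, b⟫_ℂ‖ ≤ (‖a‖ * ‖b‖ + ‖⟪a, b⟫_ℂ‖) / 2 := by
  set p : H := ⟪e, a⟫_ℂ • e with hp
  have hpy : ⟪p, b⟫_ℂ = ⟪a, e⟫_ℂ * ⟪e, b⟫_ℂ := by
    rw [hp, inner_smul_left, inner_conj_symm]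
  have h1 : ⟪p, a⟫_ℂ = ⟪p, p⟫_ℂ := by
    rw [hp, inner_smul_left, inner_smul_left, inner_smul_right,
      inner_self_eq_norm_sq_to_K, he]
    norm_num
  have h1' : ⟪a, p⟫_ℂ = ⟪p, p⟫_ℂ := by
    rw [← inner_conj_symm, h1, inner_self_conj]
  have hin : ⟪(2 : ℂ) • p - a, (2 : ℂ) • p - a⟫_ℂ = ⟪a, a⟫_ℂ := by
    simp only [inner_sub_left, inner_sub_right, inner_smul_left, inner_smul_right,
      h1, h1', Complex.conj_ofNat]
    ring
  have hrefl : ‖(2 : ℂ) • p - a‖ = ‖a‖ := by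
    rw [@norm_eq_sqrt_re_inner ℂ, @norm_eq_sqrt_re_inner ℂ _ _ _ _ a, hin]
  clear_value p
  have key : ⟪p, b⟫_ℂ = (⟪(2 : ℂ) • p - a, b⟫_ℂ + ⟪a, b⟫_ℂ) / 2 := by
    rw [inner_sub_left, inner_smul_left, Complex.conj_ofNat]
    ring
  calc ‖⟪a, e⟫_ℂ * ⟪e, b⟫_ℂ‖ = ‖⟪p, b⟫_ℂ‖ := by rw [hpy]
    _ = ‖⟪(2 : ℂ) • p - a, b⟫_ℂ + ⟪a, b⟫_ℂ‖ / 2 := by rw [key]; simp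
    _ ≤ (‖⟪(2 : ℂ) • p - a, b⟫_ℂ‖ + ‖⟪a, b⟫_ℂ‖) / 2 := by
        gcongr; exact norm_add_le _ _
    _ ≤ (‖a‖ * ‖b‖ + ‖⟪a, b⟫_ℂ‖) / 2 := by
        gcongr
        calc ‖⟪(2 : ℂ) • p - a, b⟫_ℂ‖ ≤ ‖(2 : ℂ) • p - a‖ * ‖b‖ :=
              norm_inner_le_norm _ _
          _ = ‖a‖ * ‖b‖ := by rw [hrefl]

theorem stmt18 [CompleteSpace H] (T : H →L[ℂ] H) (x : H) (hx : ‖x‖ = 1) :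
    ‖⟪T x, x⟫_ℂ‖ ^ 4 ≤
      (1 / 4) * (‖T x‖ * ‖adjoint T x‖ + ‖⟪(T ^ 2) x, x⟫_ℂ‖) ^ 2 := by
  have h1 : ⟪x, adjoint T x⟫_ℂ = ⟪T x, x⟫_ℂ := by
    rw [← adjoint_inner_right]
  have h2 : ⟪T x, adjoint T x⟫_ℂ = ⟪(T ^ 2) x, x⟫_ℂ := by
    rw [adjoint_inner_right]
    simp [pow_two]
  have hb := buzano (T x) (adjoint T x) x hx
  rw [h1, h2] at hb
  have hb2 : ‖⟪T x, x⟫_ℂ‖ ^ 2 ≤ (‖T x‖ * ‖adjoint T x‖ + ‖⟪(T ^ 2) x, x⟫_ℂ‖) / 2 := by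
    calc ‖⟪T x, x⟫_ℂ‖ ^ 2 = ‖⟪T x, x⟫_ℂ * ⟪T x, x⟫_ℂ‖ := by
          rw [norm_mul]; ring
      _ ≤ _ := hb
  nlinarith [norm_nonneg (⟪T x, x⟫_ℂ), sq_nonneg (‖⟪T x, x⟫_ℂ‖)]
end
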